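/- arXiv:math/0606128 — 2 statements merged into one kernel-verified Lean document; each statement's English description precedes it below -/
import Mathlib

section
/- Let (a_i) and (b_i) be finitely supported sequences of integers, both not identically zero, and set q_i = a_i - b_i. Let μ be the least index with q_μ ≠ 0 and ν the greatest index with q_ν ≠ 0. Then the following conditions (1) are equivalent to conditions (2): (1)(a) a_l = 0 for l < μ and for l ≥ ν; (1)(b) a_μ = q_μ > 0; (1)(c) ∑_i q_i = 0; (1)(d) max(q_l, 0) ≤ a_l ≤ ∑_{i ≤ l} q_i for all integers l. (2) Let a_μ' be the lowest nonzero a_i and b_ν' the highest nonzero b_i; then: (2)(a) all a_i, b_i are non-negative; (2)(b) a_l = 0 for l ≥ ν' and b_l = 0 for l ≤ μ'; (2)(c) ∑_i a_i = ∑_i b_i; (2)(d) ∑_{i ≤ l} b_i ≤ ∑_{i < l} a_i for all integers l. -/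
def psum (c : ℤ →₀ ℤ) (l : ℤ) : ℤ := ∑ i ∈ c.support.filter (fun i => i ≤ l), c i

lemma psum_subset (c : ℤ →₀ ℤ) (l : ℤ) {S : Finset ℤ} (h : c.support ⊆ S) :
    psum c l = ∑ i ∈ S.filter (fun i => i ≤ l), c i := by
  apply Finset.sum_subset (Finset.filter_subset_filter _ h)
  intro i hi hni
  simp only [Finset.mem_filter] at hi hni
  exact Finsupp.notMem_support_iff.mp (fun hs => hni ⟨hs, hi.2⟩)

lemma psum_sub (a b : ℤ →₀ ℤ) (l : ℤ) : psum (a - b) l = psum a l - psum b l := by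
  rw [psum_subset a l (S := a.support ∪ b.support) Finset.subset_union_left,
      psum_subset b l (S := a.support ∪ b.support) Finset.subset_union_right,
      psum_subset (a-b) l (S := a.support ∪ b.support) Finsupp.support_sub,
      ← Finset.sum_sub_distrib]
  simp [Finsupp.sub_apply]

lemma psum_succ (c : ℤ →₀ ℤ) (l : ℤ) : psum c l = psum c (l-1) + c l := by
  rw [psum_subset c l (S := insert l c.support) (Finset.subset_insert _ _),
      psum_subset c (l-1) (S := insert l c.support) (Finset.subset_insert _ _),
      ← Finset.sum_filter_add_sum_filter_not ((insert l c.support).filter (fun i => i ≤ l))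
        (fun i => i ≤ l - 1)]
  congr 1
  · apply Finset.sum_congr _ (fun _ _ => rfl)
    ext i
    simp only [Finset.mem_filter, Finset.mem_insert]
    constructor
    · rintro ⟨⟨h1, h2⟩, h3⟩; exact ⟨h1, h3⟩
    · rintro ⟨h1, h3⟩; exact ⟨⟨h1, by omega⟩, h3⟩
  · have : ((insert l c.support).filter (fun i => i ≤ l)).filter (fun i => ¬ i ≤ l - 1) = {l} := by
      ext i
      simp only [Finset.mem_filter, Finset.mem_insert, Finset.mem_singleton]
      constructor
      · rintro ⟨⟨h1, h2⟩, h3⟩; omega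
      · rintro rfl; exact ⟨⟨Or.inl rfl, le_refl _⟩, by omega⟩
    rw [this, Finset.sum_singleton]

lemma psum_total (c : ℤ →₀ ℤ) (l : ℤ) (h : ∀ i ∈ c.support, i ≤ l) :
    psum c l = ∑ i ∈ c.support, c i := by
  unfold psum; rw [Finset.filter_true_of_mem h]

/-- Equivalence of the two sets of conditions in Lemma `sets`:
with `q = a - b`, `μ` the least and `ν` the greatest index with `q ≠ 0`,
conditions (1)(a)–(d) are equivalent to conditions (2)(a)–(d). -/
theorem stmt3 (a b : ℤ →₀ ℤ) (ha : a ≠ 0) (hb : b ≠ 0) (μ ν : ℤ)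
    (hμ : (a - b) μ ≠ 0 ∧ ∀ i, (a - b) i ≠ 0 → μ ≤ i)
    (hν : (a - b) ν ≠ 0 ∧ ∀ i, (a - b) i ≠ 0 → i ≤ ν) :
    (((∀ l, l < μ → a l = 0) ∧ (∀ l, ν ≤ l → a l = 0)) ∧
      (a μ = (a - b) μ ∧ 0 < (a - b) μ) ∧
      (∑ i ∈ (a - b).support, (a - b) i = 0) ∧
      (∀ l, max ((a - b) l) 0 ≤ a l ∧ a l ≤ psum (a - b) l))
    ↔
    (((∀ i, 0 ≤ a i) ∧ (∀ i, 0 ≤ b i)) ∧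
      ((∀ μ', (a μ' ≠ 0 ∧ ∀ i, a i ≠ 0 → μ' ≤ i) → ∀ l, l ≤ μ' → b l = 0) ∧
        (∀ ν', (b ν' ≠ 0 ∧ ∀ i, b i ≠ 0 → i ≤ ν') → ∀ l, ν' ≤ l → a l = 0)) ∧
      (∑ i ∈ a.support, a i = ∑ i ∈ b.support, b i) ∧
      (∀ l, psum b l ≤ psum a (l - 1))) := by
  obtain ⟨hqμ, hμmin⟩ := hμ
  obtain ⟨hqν, hνmax⟩ := hν
  have hsub : ∀ l, (a - b) l = a l - b l := fun l => Finsupp.sub_apply a b l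
  -- total sums
  have key : (∑ i ∈ (a - b).support, (a - b) i) =
      (∑ i ∈ a.support, a i) - (∑ i ∈ b.support, b i) := by
    set T : Finset ℤ := insert 0 (a.support ∪ b.support) with hT
    have hTne : T.Nonempty := ⟨0, Finset.mem_insert_self _ _⟩
    set L := T.max' hTne with hL
    have hle : ∀ i ∈ T, i ≤ L := fun i hi => Finset.le_max' T i hi
    have hab : a.support ∪ b.support ⊆ T := Finset.subset_insert _ _
    have h1 : ∀ i ∈ a.support, i ≤ L := fun i hi =>
      hle i (hab (Finset.mem_union_left _ hi))
    have h2 : ∀ i ∈ b.support, i ≤ L := fun i hi =>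
      hle i (hab (Finset.mem_union_right _ hi))
    have h3 : ∀ i ∈ (a - b).support, i ≤ L := fun i hi =>
      hle i (hab (Finsupp.support_sub hi))
    rw [← psum_total a L h1, ← psum_total b L h2, ← psum_total (a - b) L h3, psum_sub]
  constructor
  · rintro ⟨⟨h1a1, h1a2⟩, ⟨h1b1, h1b2⟩, h1c, h1d⟩
    have hA : ∀ i, 0 ≤ a i := fun i => le_trans (le_max_right _ _) (h1d i).1
    have hB : ∀ i, 0 ≤ b i := by
      intro i
      have h1 := le_trans (le_max_left _ _) (h1d i).1
      have h2 := hsub i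
      omega
    refine ⟨⟨hA, hB⟩, ⟨?_, ?_⟩, by omega, ?_⟩
    · rintro μ' ⟨haμ', hμ'min⟩ l hl
      -- μ' = μ
      have haμ : a μ ≠ 0 := by rw [h1b1]; omega
      have e1 : μ' ≤ μ := hμ'min μ haμ
      have e2 : μ = μ' := by
        by_contra hne
        exact haμ' (h1a1 μ' (lt_of_le_of_ne e1 (fun h => hne h.symm)))
      subst e2
      rcases lt_or_eq_of_le hl with hlt | heq
      · have hq0 : (a - b) l = 0 := by
          by_contra h; exact absurd (hμmin l h) (by omega)
        have := hsub l
        have := h1a1 l hlt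
        omega
      · subst heq
        have := hsub l
        omega
    · rintro ν' ⟨hbν', hν'max⟩ l hl
      have hbν : b ν ≠ 0 := by
        have := hsub ν
        have := h1a2 ν le_rfl
        omega
      exact h1a2 l (le_trans (hν'max ν hbν) hl)
    · intro l
      have h1 := (h1d l).2
      have h2 := psum_sub a b l
      have h3 := psum_succ a l
      omega
  · rintro ⟨⟨hA, hB⟩, ⟨h2b1, h2b2⟩, h2c, h2d⟩
    have haS : a.support.Nonempty := Finsupp.support_nonempty_iff.mpr ha
    have hbS : b.support.Nonempty := Finsupp.support_nonempty_iff.mpr hb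
    set μ' := a.support.min' haS with hμ'
    set ν' := b.support.max' hbS with hν'
    have hμ'prop : a μ' ≠ 0 ∧ ∀ i, a i ≠ 0 → μ' ≤ i :=
      ⟨Finsupp.mem_support_iff.mp (Finset.min'_mem _ _),
       fun i hi => Finset.min'_le _ _ (Finsupp.mem_support_iff.mpr hi)⟩
    have hν'prop : b ν' ≠ 0 ∧ ∀ i, b i ≠ 0 → i ≤ ν' :=
      ⟨Finsupp.mem_support_iff.mp (Finset.max'_mem _ _),
       fun i hi => Finset.le_max' _ _ (Finsupp.mem_support_iff.mpr hi)⟩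
    have hbz : ∀ l, l ≤ μ' → b l = 0 := h2b1 μ' hμ'prop
    have haz : ∀ l, ν' ≤ l → a l = 0 := h2b2 ν' hν'prop
    -- μ = μ'
    have hqμ' : (a - b) μ' ≠ 0 := by
      have := hsub μ'
      have := hbz μ' le_rfl
      have := hμ'prop.1
      omega
    have e1 : μ ≤ μ' := hμmin μ' hqμ'
    have e2 : μ' ≤ μ := by
      by_cases h : a μ = 0
      · have hbμ : b μ ≠ 0 := by have := hsub μ; omega
        by_contra hc
        push_neg at hc
        exact hbμ (hbz μ (by omega))
      · exact hμ'prop.2 μ h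
    have hμeq : μ = μ' := le_antisymm e1 e2
    -- ν' ≤ ν
    have hqν' : (a - b) ν' ≠ 0 := by
      have := hsub ν'
      have := haz ν' le_rfl
      have := hν'prop.1
      omega
    have e3 : ν' ≤ ν := hνmax ν' hqν'
    have hbμ0 : b μ = 0 := hbz μ (le_of_eq hμeq)
    have haμpos : 0 < a μ := by
      rw [hμeq]
      have := hA μ'
      have := hμ'prop.1
      omega
    refine ⟨⟨?_, ?_⟩, ⟨?_, ?_⟩, by omega, ?_⟩
    · intro l hl
      by_contra h
      have := hμ'prop.2 l h
      omega
    · intro l hl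
      exact haz l (by omega)
    · have := hsub μ; omega
    · have := hsub μ; omega
    · intro l
      constructor
      · have := hsub l
        have := hA l
        have := hB l
        simp only [max_le_iff]
        omega
      · have h1 := h2d l
        have h2 := psum_sub a b l
        have h3 := psum_succ a l
        omega
end

section
/- Let (a_i), (b_i) be finitely supported sequences of non-negative integers with m := ∑_i a_i = ∑_i b_i =: n > 0, and suppose that for all (α, β) ∈ [1,n] × [1,n] with β ≥ α one has S(a)_α < S(b)_β. Then for every integer l, ∑_{i ≤ l} b_i ≤ ∑_{i < l} a_i. -/
/-- `Sseq c α` is the `α`-th entry (for `1 ≤ α ≤ ∑ c_i`) of the non-decreasing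
sequence `S(c)` in which each index `i` appears exactly `c_i` times; it is the least
`l` with `∑_{i ≤ l} c_i ≥ α`. -/
noncomputable def Sseq (c : ℤ →₀ ℤ) (α : ℕ) : ℤ := sInf {l : ℤ | (α : ℤ) ≤ psum c l}

lemma psum_nonneg (c : ℤ →₀ ℤ) (h : ∀ i, 0 ≤ c i) (l : ℤ) : 0 ≤ psum c l :=
  Finset.sum_nonneg fun i _ => h i

lemma psum_mono (c : ℤ →₀ ℤ) (h : ∀ i, 0 ≤ c i) {l l' : ℤ} (hll : l ≤ l') :
    psum c l ≤ psum c l' := by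
  apply Finset.sum_le_sum_of_subset_of_nonneg
  · intro i hi
    simp only [Finset.mem_filter] at hi ⊢
    exact ⟨hi.1, hi.2.trans hll⟩
  · exact fun i _ _ => h i

lemma psum_le_total (c : ℤ →₀ ℤ) (h : ∀ i, 0 ≤ c i) (l : ℤ) :
    psum c l ≤ ∑ i ∈ c.support, c i :=
  Finset.sum_le_sum_of_subset_of_nonneg (Finset.filter_subset _ _) (fun i _ _ => h i)

/-- The ladder condition (`S(a)_α < S(b)_β` for all `β ≥ α` in `[1,n]`) implies that
for every integer `l`, `∑_{i ≤ l} b_i ≤ ∑_{i < l} a_i`. -/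
theorem stmt5 (a b : ℤ →₀ ℤ)
    (hann : ∀ i, 0 ≤ a i) (hbnn : ∀ i, 0 ≤ b i) (n : ℕ) (hn : 0 < n)
    (hsa : ∑ i ∈ a.support, a i = (n : ℤ)) (hsb : ∑ i ∈ b.support, b i = (n : ℤ))
    (hladder : ∀ α β : ℕ, 1 ≤ α → α ≤ n → 1 ≤ β → β ≤ n → α ≤ β →
      Sseq a α < Sseq b β) :
    ∀ l : ℤ, psum b l ≤ psum a (l - 1) := by
  have hasupp : a.support.Nonempty := by
    by_contra hne
    rw [Finset.not_nonempty_iff_eq_empty] at hne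
    rw [hne, Finset.sum_empty] at hsa
    exact_mod_cast hn.ne (by exact_mod_cast hsa)
  have hbsupp : b.support.Nonempty := by
    by_contra hne
    rw [Finset.not_nonempty_iff_eq_empty] at hne
    rw [hne, Finset.sum_empty] at hsb
    exact_mod_cast hn.ne (by exact_mod_cast hsb)
  intro l
  by_cases hβ : psum b l ≤ 0
  · exact hβ.trans (psum_nonneg a hann _)
  push_neg at hβ
  by_contra hcon
  push_neg at hcon
  -- define β and α
  set B : ℤ := psum b l with hB
  set A : ℤ := psum a (l - 1) with hA
  have hA0 : 0 ≤ A := psum_nonneg a hann _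
  have hBn : B ≤ (n : ℤ) := by rw [← hsb]; exact psum_le_total b hbnn l
  have hAB : A + 1 ≤ B := hcon
  set β : ℕ := B.toNat with hβdef
  set α : ℕ := A.toNat + 1 with hαdef
  have hβcast : (β : ℤ) = B := Int.toNat_of_nonneg hβ.le
  have hαcast : (α : ℤ) = A + 1 := by
    rw [hαdef]; push_cast; rw [Int.toNat_of_nonneg hA0]
  have hαβ : α ≤ β := by
    have : (α : ℤ) ≤ (β : ℤ) := by rw [hαcast, hβcast]; exact hAB
    exact_mod_cast this
  have hβn : β ≤ n := by
    have : (β : ℤ) ≤ (n : ℤ) := by rw [hβcast]; exact hBn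
    exact_mod_cast this
  have h1β : 1 ≤ β := by
    have : (1 : ℤ) ≤ (β : ℤ) := by rw [hβcast]; exact hβ
    exact_mod_cast this
  have hlad := hladder α β (Nat.le_add_left 1 _) (le_trans hαβ hβn) h1β hβn hαβ
  -- Sseq b β ≤ l
  have hSb : Sseq b β ≤ l := by
    apply csInf_le
    · refine ⟨b.support.min' hbsupp, ?_⟩
      intro x hx
      simp only [Set.mem_setOf_eq] at hx
      have hpos : 0 < psum b x := lt_of_lt_of_le (by rw [hβcast]; exact hβ) hx
      have hne : (b.support.filter (fun i => i ≤ x)).Nonempty := by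
        by_contra hh
        rw [Finset.not_nonempty_iff_eq_empty] at hh
        rw [psum, hh, Finset.sum_empty] at hpos
        exact lt_irrefl 0 hpos
      obtain ⟨i, hi⟩ := hne
      simp only [Finset.mem_filter] at hi
      exact le_trans (Finset.min'_le _ _ hi.1) hi.2
    · simp only [Set.mem_setOf_eq, hβcast]; exact le_refl B
  -- l ≤ Sseq a α
  have hSa : l ≤ Sseq a α := by
    apply le_csInf
    · refine ⟨a.support.max' hasupp, ?_⟩
      simp only [Set.mem_setOf_eq]
      have : psum a (a.support.max' hasupp) = (n : ℤ) := by
        rw [psum, ← hsa]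
        congr 1
        apply Finset.filter_true_of_mem
        intro i hi
        exact Finset.le_max' _ _ hi
      rw [this, hαcast]
      calc A + 1 ≤ B := hAB
        _ ≤ (n : ℤ) := hBn
    · intro x hx
      simp only [Set.mem_setOf_eq] at hx
      by_contra hxl
      push_neg at hxl
      have : psum a x ≤ A := psum_mono a hann (by omega)
      rw [hαcast] at hx
      omega
  exact absurd hlad (not_lt.mpr (hSb.trans hSa))
end
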